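/- Assume additionally μ₀ ≤ μ₁ ≤ … ≤ μ_{d−2}. For all integers 1 ≤ i ≤ j ≤ d−1 and every u ∈ [0,1], setting ρ_{i,u} = (1−u)|0⟩⟨0| + u|i⟩⟨i| and ρ_{j,u} = (1−u)|0⟩⟨0| + u|j⟩⟨j|, one has S(O^c(ρ_{i,u})) ≥ S(O^c(ρ_{j,u})) and consequently S(O(ρ_{i,u})) − S(O^c(ρ_{i,u})) ≤ S(O(ρ_{j,u})) − S(O^c(ρ_{j,u})). (Hence the coherent informations of the qubit sub-channels of O obtained by restricting the input to span{|0⟩,|i⟩} are monotonically nondecreasing in i.) -/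

import Mathlib

open Matrix ComplexOrder

/-- Von Neumann entropy (base-2) of a matrix: −∑ λᵢ log₂ λᵢ over its eigenvalues
(0 if the matrix is not Hermitian). -/
noncomputable def vnEntropy {n : ℕ} (ρ : Matrix (Fin n) (Fin n) ℂ) : ℝ :=
  if h : ρ.IsHermitian then -∑ i, (h.eigenvalues i) * Real.logb 2 (h.eigenvalues i) else 0

/-- The basis ket |i⟩ of ℂ^d (zero if out of range). -/
noncomputable def bket (d i : ℕ) : Fin d → ℂ := fun p => if (p : ℕ) = i then 1 else 0

/-- The projector |i⟩⟨i| on ℂ^d. -/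
noncomputable def bproj (d i : ℕ) : Matrix (Fin d) (Fin d) ℂ :=
  Matrix.vecMulVec (bket d i) (star (bket d i))

/-- Kraus operator K_k = μ_k|k⟩⟨0| + |d−1⟩⟨k+1| of the channel O. -/
noncomputable def KrO (d : ℕ) (μ : ℕ → ℝ) (k : ℕ) : Matrix (Fin d) (Fin d) ℂ :=
  ((μ k : ℝ) : ℂ) • Matrix.vecMulVec (bket d k) (star (bket d 0)) +
    Matrix.vecMulVec (bket d (d-1)) (star (bket d (k+1)))

/-- The channel O : M_d(ℂ) → M_d(ℂ) with parameters μ₀,…,μ_{d−2}. -/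
noncomputable def chanO (d : ℕ) (μ : ℕ → ℝ) (X : Matrix (Fin d) (Fin d) ℂ) :
    Matrix (Fin d) (Fin d) ℂ :=
  ∑ k ∈ Finset.range (d - 1), KrO d μ k * X * (KrO d μ k)ᴴ

/-- Kraus operator L_j = μ_j|j⟩⟨0| of O^c, for 0 ≤ j ≤ d−2. -/
noncomputable def LrO (d : ℕ) (μ : ℕ → ℝ) (j : ℕ) : Matrix (Fin (d-1)) (Fin d) ℂ :=
  ((μ j : ℝ) : ℂ) • Matrix.vecMulVec (bket (d-1) j) (star (bket d 0))

/-- Kraus operator L_{d−1} = ∑_{i=1}^{d−1}|i−1⟩⟨i| of O^c. -/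
noncomputable def VrO (d : ℕ) : Matrix (Fin (d-1)) (Fin d) ℂ :=
  Matrix.of fun a b => if (b : ℕ) = (a : ℕ) + 1 then 1 else 0

/-- The complementary channel O^c : M_d(ℂ) → M_{d−1}(ℂ). -/
noncomputable def chanOc (d : ℕ) (μ : ℕ → ℝ) (X : Matrix (Fin d) (Fin d) ℂ) :
    Matrix (Fin (d-1)) (Fin (d-1)) ℂ :=
  (∑ j ∈ Finset.range (d - 1), LrO d μ j * X * (LrO d μ j)ᴴ) + VrO d * X * (VrO d)ᴴ

/-!
On the inputs ρ_{m,u} = (1−u)|0⟩⟨0| + u|m⟩⟨m| (1 ≤ m ≤ d−1) both channels are computed by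
following the basis kets through the Kraus operators. K_{m−1} sends |m⟩ to |d−1⟩ and the other
K_k kill it, so O(|m⟩⟨m|) = |d−1⟩⟨d−1| and O(ρ_{m,u}) does not depend on m. The complementary output is
diagonal with entries (1−u)μ_k² + u δ_{k,m−1}, so S(O^c(ρ_{m,u})) differs from the entropy of the
vector ((1−u)μ_k²)_k only by f((1−u)μ_{m−1}²) − f((1−u)μ_{m−1}² + u), where f(x) = x log₂ x.
Convexity of f makes the increment f(a + u) − f(a) nondecreasing in a, and the μ's are ascending.
-/

theorem Matrix.mul_vecMulVec_star_mul_conjTranspose {l m α : Type*} [Fintype m]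
    [NonUnitalSemiring α] [StarRing α] (K : Matrix l m α) (v : m → α) :
    K * vecMulVec v (star v) * Kᴴ = vecMulVec (K *ᵥ v) (star (K *ᵥ v)) := by
  rw [mul_vecMulVec, vecMulVec_mul, star_mulVec]

theorem ConvexOn.add_sub_le_add_sub {s : Set ℝ} {f : ℝ → ℝ} (hf : ConvexOn ℝ s f) {a b u : ℝ}
    (ha : a ∈ s) (hbu : b + u ∈ s) (hab : a ≤ b) (hu : 0 ≤ u) :
    f (a + u) - f a ≤ f (b + u) - f b := by
  rcases hu.eq_or_lt with rfl | hu
  · simp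
  rcases hab.eq_or_lt with rfl | hab
  · rfl
  have hmem : ∀ x, a ≤ x → x ≤ b + u → x ∈ s := fun x h₁ h₂ =>
    hf.1.ordConnected.out ha hbu ⟨h₁, h₂⟩
  have hau := hmem (a + u) (by linarith) (by linarith)
  have hb := hmem b hab.le (by linarith)
  have h₁ := hf.secant_mono ha hau hbu (by linarith) (by linarith) (by linarith)
  have h₂ := hf.secant_mono hbu ha hb (by linarith) (by linarith) hab.le
  have h₂' : (f (b + u) - f a) / (b + u - a) ≤ (f (b + u) - f b) / u := by
    have e₁ : (f a - f (b + u)) / (a - (b + u)) = (f (b + u) - f a) / (b + u - a) := by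
      rw [← neg_div_neg_eq, neg_sub, neg_sub]
    have e₂ : (f b - f (b + u)) / (b - (b + u)) = (f (b + u) - f b) / u := by
      rw [← neg_div_neg_eq, neg_sub, neg_sub, add_sub_cancel_left]
    rwa [e₁, e₂] at h₂
  rw [add_sub_cancel_left] at h₁
  have h := (div_le_div_iff_of_pos_right hu).1 (h₁.trans h₂')
  linarith

theorem Real.convexOn_mul_logb {b : ℝ} (hb : 1 < b) :
    ConvexOn ℝ (Set.Ici 0) fun x => x * Real.logb b x := by
  have h := Real.convexOn_mul_log.smul (inv_nonneg.2 (Real.log_pos hb).le)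
  have e : (fun x => x * Real.logb b x) = fun x => (Real.log b)⁻¹ • (x * Real.log x) := by
    ext x
    rw [smul_eq_mul, Real.logb]
    ring
  rwa [e]

theorem Fintype.sum_comp_add_ite {ι : Type*} [Fintype ι] [DecidableEq ι] (f : ℝ → ℝ) (c : ι → ℝ)
    (p : ι) (u : ℝ) :
    ∑ k, f (c k + if k = p then u else 0) = ∑ k, f (c k) + (f (c p + u) - f (c p)) := by
  rw [← Finset.add_sum_erase _ _ (Finset.mem_univ p),
    ← Finset.add_sum_erase _ _ (Finset.mem_univ p), if_pos rfl,
    Finset.sum_congr rfl fun k hk => by rw [if_neg (Finset.ne_of_mem_erase hk), add_zero]]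
  ring

theorem Matrix.IsHermitian.sum_comp_eigenvalues_diagonal {n : Type*} [Fintype n] [DecidableEq n]
    {w : n → ℝ} (h : (diagonal fun k => (w k : ℂ)).IsHermitian) (g : ℝ → ℝ) :
    ∑ k, g (h.eigenvalues k) = ∑ k, g (w k) := by
  have hroots := h.roots_charpoly_eq_eigenvalues
  rw [charpoly_diagonal, Polynomial.roots_prod _ _ (by simp [Finset.prod_ne_zero_iff,
    Polynomial.X_sub_C_ne_zero])] at hroots
  simp only [Polynomial.roots_X_sub_C, Multiset.bind_singleton, Complex.coe_algebraMap,
    Function.comp_apply] at hroots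
  have hsum := congrArg (fun s : Multiset ℂ => (s.map fun z => g z.re).sum) hroots
  simp only [Multiset.map_map, Function.comp_apply, Complex.ofReal_re, Finset.sum_map_val] at hsum
  exact hsum.symm

theorem vnEntropy_diagonal {n : ℕ} (w : Fin n → ℝ) :
    vnEntropy (diagonal fun k => (w k : ℂ)) = -∑ k, w k * Real.logb 2 (w k) := by
  have h : (diagonal fun k => (w k : ℂ)).IsHermitian := by
    simp [IsHermitian, diagonal_conjTranspose, Pi.star_def]
  rw [vnEntropy, dif_pos h, h.sum_comp_eigenvalues_diagonal fun x => x * Real.logb 2 x]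

theorem mulVec_bket {m d i : ℕ} (M : Matrix (Fin m) (Fin d) ℂ) (hi : i < d) :
    M *ᵥ bket d i = fun a => M a ⟨i, hi⟩ := by
  have : bket d i = Pi.single ⟨i, hi⟩ 1 := by
    ext p
    simp [bket, Pi.single_apply, Fin.ext_iff]
  rw [this, mulVec_single_one]
  rfl

theorem bproj_eq_diagonal (d i : ℕ) : bproj d i = diagonal (bket d i) := by
  ext a b
  simp only [bproj, bket, vecMulVec_apply, Pi.star_apply, diagonal_apply, Fin.ext_iff]
  split_ifs <;> simp_all

section Channels

variable {d : ℕ} (μ : ℕ → ℝ)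

theorem KrO_mulVec_bket {m : ℕ} (k : ℕ) (hm : 1 ≤ m) (hmd : m < d) :
    KrO d μ k *ᵥ bket d m = if m = k + 1 then bket d (d - 1) else 0 := by
  ext a
  have hm0 : m ≠ 0 := by omega
  by_cases h : m = k + 1
  · subst h
    simp [mulVec_bket _ hmd, KrO, bket, vecMulVec_apply]
  · simp [mulVec_bket _ hmd, KrO, bket, vecMulVec_apply, h, hm0]

theorem LrO_mulVec_bket_zero (j : ℕ) (hd : 0 < d) :
    LrO d μ j *ᵥ bket d 0 = (μ j : ℂ) • bket (d - 1) j := by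
  ext a
  simp [mulVec_bket _ hd, LrO, bket, vecMulVec_apply]

theorem LrO_mulVec_bket {m : ℕ} (j : ℕ) (hm : 1 ≤ m) (hmd : m < d) :
    LrO d μ j *ᵥ bket d m = 0 := by
  ext a
  simp [mulVec_bket _ hmd, LrO, bket, vecMulVec_apply, show m ≠ 0 by omega]

theorem VrO_mulVec_bket_zero (hd : 0 < d) : VrO d *ᵥ bket d 0 = 0 := by
  ext a
  simp [mulVec_bket _ hd, VrO]

theorem VrO_mulVec_bket {m : ℕ} (hm : 1 ≤ m) (hmd : m < d) :
    VrO d *ᵥ bket d m = bket (d - 1) (m - 1) := by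
  ext a
  have ha := a.isLt
  simp only [mulVec_bket _ hmd, VrO, bket, of_apply]
  exact if_congr (by omega) rfl rfl

theorem chanO_add_smul (a b : ℂ) (X Y : Matrix (Fin d) (Fin d) ℂ) :
    chanO d μ (a • X + b • Y) = a • chanO d μ X + b • chanO d μ Y := by
  simp only [chanO, Matrix.mul_add, Matrix.add_mul, Matrix.mul_smul, Matrix.smul_mul,
    Finset.sum_add_distrib, Finset.smul_sum]

theorem chanOc_add_smul (a b : ℂ) (X Y : Matrix (Fin d) (Fin d) ℂ) :
    chanOc d μ (a • X + b • Y) = a • chanOc d μ X + b • chanOc d μ Y := by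
  simp only [chanOc, Matrix.mul_add, Matrix.add_mul, Matrix.mul_smul, Matrix.smul_mul,
    Finset.sum_add_distrib, Finset.smul_sum, smul_add]
  abel

theorem chanO_bproj {m : ℕ} (hm : 1 ≤ m) (hmd : m < d) :
    chanO d μ (bproj d m) = bproj d (d - 1) := by
  simp only [chanO, bproj, mul_vecMulVec_star_mul_conjTranspose, KrO_mulVec_bket μ _ hm hmd]
  rw [Finset.sum_eq_single_of_mem (m - 1) (Finset.mem_range.2 (by omega))
    fun k _ hk => by rw [if_neg (by omega), star_zero, vecMulVec_zero]]
  rw [if_pos (by omega)]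

theorem chanOc_bproj_zero (hd : 0 < d) :
    chanOc d μ (bproj d 0) = diagonal fun k : Fin (d - 1) => ((μ k ^ 2 : ℝ) : ℂ) := by
  simp only [chanOc, bproj, mul_vecMulVec_star_mul_conjTranspose, LrO_mulVec_bket_zero μ _ hd,
    VrO_mulVec_bket_zero hd, star_zero, vecMulVec_zero, add_zero]
  ext a b
  by_cases hab : a = b
  · subst hab
    simp [Matrix.sum_apply, vecMulVec_apply, bket, sq]
  · simp [Matrix.sum_apply, vecMulVec_apply, bket, hab, Fin.val_inj]

theorem chanOc_bproj {m : ℕ} (hm : 1 ≤ m) (hmd : m < d) :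
    chanOc d μ (bproj d m) = diagonal (bket (d - 1) (m - 1)) := by
  simp only [chanOc, bproj, mul_vecMulVec_star_mul_conjTranspose, LrO_mulVec_bket μ _ hm hmd,
    VrO_mulVec_bket hm hmd, star_zero, zero_vecMulVec, Finset.sum_const_zero, zero_add]
  exact bproj_eq_diagonal _ _

theorem chanO_mix_eq (u : ℝ) {m m' : ℕ} (hm : 1 ≤ m) (hmd : m < d) (hm' : 1 ≤ m')
    (hm'd : m' < d) :
    chanO d μ (((1 - u : ℝ) : ℂ) • bproj d 0 + (u : ℂ) • bproj d m) =
      chanO d μ (((1 - u : ℝ) : ℂ) • bproj d 0 + (u : ℂ) • bproj d m') := by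
  rw [chanO_add_smul, chanO_add_smul, chanO_bproj μ hm hmd, chanO_bproj μ hm' hm'd]

theorem chanOc_mix (u : ℝ) {m : ℕ} (hm : 1 ≤ m) (hmd : m < d) :
    chanOc d μ (((1 - u : ℝ) : ℂ) • bproj d 0 + (u : ℂ) • bproj d m) =
      diagonal fun k : Fin (d - 1) =>
        (((1 - u) * μ k ^ 2 + if k = ⟨m - 1, by omega⟩ then u else 0 : ℝ) : ℂ) := by
  rw [chanOc_add_smul, chanOc_bproj_zero μ (by omega), chanOc_bproj μ hm hmd]
  ext a b
  by_cases hab : a = b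
  · subst hab
    by_cases ha : (a : ℕ) = m - 1 <;> simp [bket, ha, Fin.ext_iff]
  · simp [hab]

theorem vnEntropy_chanOc_mix_anti {u : ℝ} (hu : u ∈ Set.Icc (0 : ℝ) 1) {i j : ℕ} (hi : 1 ≤ i)
    (hij : i ≤ j) (hj : j < d) (hμ0 : 0 ≤ μ (i - 1)) (hμij : μ (i - 1) ≤ μ (j - 1)) :
    vnEntropy (chanOc d μ (((1 - u : ℝ) : ℂ) • bproj d 0 + (u : ℂ) • bproj d j)) ≤
      vnEntropy (chanOc d μ (((1 - u : ℝ) : ℂ) • bproj d 0 + (u : ℂ) • bproj d i)) := by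
  set G : ℝ → ℝ := fun x => x * Real.logb 2 x
  set c : Fin (d - 1) → ℝ := fun k => (1 - u) * μ k ^ 2
  rw [chanOc_mix μ u hi (by omega), chanOc_mix μ u (by omega) hj, vnEntropy_diagonal,
    vnEntropy_diagonal, Fintype.sum_comp_add_ite G c, Fintype.sum_comp_add_ite G c]
  have hu1 : 0 ≤ 1 - u := by linarith [hu.2]
  have hc : (1 - u) * μ (i - 1) ^ 2 ≤ (1 - u) * μ (j - 1) ^ 2 :=
    mul_le_mul_of_nonneg_left (pow_le_pow_left₀ hμ0 hμij 2) hu1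
  have hG := (Real.convexOn_mul_logb one_lt_two).add_sub_le_add_sub
    (Set.mem_Ici.2 (by positivity)) (Set.mem_Ici.2 (by nlinarith [hu.1])) hc hu.1
  exact neg_le_neg (add_le_add_right hG _)

end Channels

theorem stmt18_general (d : ℕ) (μ : ℕ → ℝ)
    (hμ0 : ∀ j < d - 1, 0 ≤ μ j)
    (hμmono : ∀ j k, j ≤ k → k < d - 1 → μ j ≤ μ k)
    (i j : ℕ) (hi : 1 ≤ i) (hij : i ≤ j) (hj : j ≤ d - 1)
    (u : ℝ) (hu : u ∈ Set.Icc (0 : ℝ) 1) :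
    let ρi : Matrix (Fin d) (Fin d) ℂ := ((1 - u : ℝ) : ℂ) • bproj d 0 + (u : ℂ) • bproj d i
    let ρj : Matrix (Fin d) (Fin d) ℂ := ((1 - u : ℝ) : ℂ) • bproj d 0 + (u : ℂ) • bproj d j
    vnEntropy (chanOc d μ ρj) ≤ vnEntropy (chanOc d μ ρi) ∧
    vnEntropy (chanO d μ ρi) - vnEntropy (chanOc d μ ρi) ≤
      vnEntropy (chanO d μ ρj) - vnEntropy (chanOc d μ ρj) := by
  intro ρi ρj
  have hjd : j < d := by omega
  have hOc : vnEntropy (chanOc d μ ρj) ≤ vnEntropy (chanOc d μ ρi) :=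
    vnEntropy_chanOc_mix_anti μ hu hi hij hjd (hμ0 _ (by omega))
      (hμmono _ _ (by omega) (by omega))
  have hO : chanO d μ ρi = chanO d μ ρj := chanO_mix_eq μ u hi (by omega) (by omega) hjd
  refine ⟨hOc, ?_⟩
  rw [hO]
  linarith

/-- For ascending μ's and ρ_{i,u} = (1−u)|0⟩⟨0| + u|i⟩⟨i|, the environment output
entropy is nonincreasing in i and hence the coherent information of the qubit
sub-channels is nondecreasing in i. -/
theorem stmt18 (d : ℕ) (hd : 3 ≤ d) (μ : ℕ → ℝ)
    (hμ0 : ∀ j < d - 1, 0 ≤ μ j)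
    (hμsum : ∑ j ∈ Finset.range (d - 1), (μ j) ^ 2 = 1)
    (hμmono : ∀ j k, j ≤ k → k < d - 1 → μ j ≤ μ k)
    (i j : ℕ) (hi : 1 ≤ i) (hij : i ≤ j) (hj : j ≤ d - 1)
    (u : ℝ) (hu : u ∈ Set.Icc (0 : ℝ) 1) :
    let ρi : Matrix (Fin d) (Fin d) ℂ := ((1 - u : ℝ) : ℂ) • bproj d 0 + (u : ℂ) • bproj d i
    let ρj : Matrix (Fin d) (Fin d) ℂ := ((1 - u : ℝ) : ℂ) • bproj d 0 + (u : ℂ) • bproj d j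
    vnEntropy (chanOc d μ ρj) ≤ vnEntropy (chanOc d μ ρi) ∧
    vnEntropy (chanO d μ ρi) - vnEntropy (chanOc d μ ρi) ≤
      vnEntropy (chanO d μ ρj) - vnEntropy (chanOc d μ ρj) :=
  stmt18_general d μ hμ0 hμmono i j hi hij hj u hu
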